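/- Let k ≥ 1 and let a, b be positive integers. For every n ≥ 0, the b-fold convolution power of the sequence (F^{a/b}_{k,m})_m in degree n equals the a-fold convolution power of the sequence of generalized Fibonacci polynomials (F_{k,m})_m in degree n; that is, Σ_{j₁+⋯+j_b = n} F^{a/b}_{k,j₁}⋯F^{a/b}_{k,j_b} = Σ_{i₁+⋯+i_a = n} F_{k,i₁}⋯F_{k,i_a} in ℚ[t₁,…,t_k]. In other words, F^{a/b} is a b-th convolution root of the a-th convolution power of the GFP sequence. -/

import Mathlib

/-!
With `T = t₁x + ⋯ + t_k x^k`, the sequence `(F^q_{k,n})ₙ` is the coefficient sequence of the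
power series `(1 - T)^(-q)`: the binomial series gives `(-1)ᵐ·binom(-q, m) = B_{m-1}(q)/m!`, and by
the multinomial theorem the coefficient of `xⁿ` in `Tᵐ` is `∑ |α|!/(α₁!⋯α_k!)·t^α` over the
partitions `α ⊢ n` with `|α| = m`. Since `F_{k,n} = F^1_{k,n}`, both sides of the identity are the
coefficient of `xⁿ` in `((1 - T)^(-a/b))^b = (1 - T)^(-a) = ((1 - T)^(-1))^a`.
-/

open Finset MvPolynomial

/-- The set of partitions `α ⊢ n` with parts at most `k`, encoded as tuples
`α = (α₁, …, α_k) ∈ ℕ^k` (0-indexed) with `∑ j, (j+1)·α_j = n`. -/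
def partitions (k n : ℕ) : Finset (Fin k → ℕ) :=
  (Fintype.piFinset fun _ : Fin k => Finset.range (n + 1)).filter
    fun α => ∑ j : Fin k, (j.1 + 1) * α j = n

/-- The variable `t_{m+1}` of `ℚ[t₁,…,t_k]` (0-indexed), with the convention
`t_j = 0` for `j > k`. -/
noncomputable def tQ (k m : ℕ) : MvPolynomial (Fin k) ℚ :=
  if h : m < k then X ⟨m, h⟩ else 0

/-- The Stirling operator of the first kind: `B q m = q(q+1)⋯(q+m-1)`, i.e.
`B q m = B_{m-1}(q)` in the paper's notation, with `B q 0 = B_{-1}(q) = 1`. -/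
def B (q : ℚ) (m : ℕ) : ℚ := ∏ i ∈ Finset.range m, (q + i)

/-- The `q`-th convolution root of the generalized Fibonacci polynomial:
`F^q_{k,n} = ∑_{α ⊢ n} (B_{|α|-1}(q) / (α₁!⋯α_k!)) · t^α`, with `F^q_{k,0} = 1`. -/
noncomputable def Fq (k : ℕ) (q : ℚ) (n : ℕ) : MvPolynomial (Fin k) ℚ :=
  if n = 0 then 1 else
    ∑ α ∈ partitions k n,
      C (B q (∑ j, α j) / ∏ j, ((α j).factorial : ℚ)) * ∏ j, X j ^ α j

/-- The generalized Fibonacci polynomial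
`F_{k,n} = ∑_{α ⊢ n} (|α|!/(α₁!⋯α_k!))·t^α` in `ℤ[t₁,…,t_k]`, with `F_{k,0} = 1`. -/
noncomputable def F (k n : ℕ) : MvPolynomial (Fin k) ℤ :=
  ∑ α ∈ partitions k n,
    (Nat.multinomial Finset.univ α : MvPolynomial (Fin k) ℤ) * ∏ j, X j ^ α j

lemma B_eq_ascPochhammer_eval (q : ℚ) (m : ℕ) : B q m = (ascPochhammer ℚ m).eval q := by
  induction m with
  | zero => simp [B]
  | succ m ih => rw [B, Finset.prod_range_succ, ← B, ih, ascPochhammer_succ_eval]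

lemma choose_neg_mul_neg_one_pow (q : ℚ) (m : ℕ) :
    Ring.choose (-q) m * (-1) ^ m = B q m / m.factorial := by
  rw [Ring.choose_neg', B_eq_ascPochhammer_eval, ← Polynomial.ascPochhammer_smeval_eq_eval,
    ← Ring.factorial_nsmul_multichoose_eq_ascPochhammer, Units.smul_def, zsmul_eq_mul,
    Int.cast_negOnePow_natCast, nsmul_eq_mul]
  field_simp
  simp [← pow_mul, pow_mul']

lemma Nat.cast_multinomial {ι K : Type*} [Field K] [CharZero K] (s : Finset ι) (α : ι → ℕ) :
    (Nat.multinomial s α : K) = (∑ i ∈ s, α i).factorial / ∏ i ∈ s, ((α i).factorial : K) := by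
  rw [eq_div_iff (by simp [Finset.prod_ne_zero_iff, Nat.factorial_ne_zero]), mul_comm,
    ← Nat.multinomial_spec]
  push_cast
  rfl

open scoped PowerSeries

lemma PowerSeries.coeff_pow_eq_sum_antidiagonalTuple {R : Type*} [CommSemiring R] (f : R⟦X⟧)
    (m n : ℕ) : coeff n (f ^ m) = ∑ l ∈ Finset.Nat.antidiagonalTuple m n, ∏ i, coeff (l i) f := by
  rw [← Fin.prod_const, coeff_prod, ← piAntidiag_univ_fin_eq_antidiagonalTuple]
  refine Finset.sum_nbij' (⇑) Finsupp.equivFunOnFinite.symm ?_ ?_ ?_ ?_ ?_ <;>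
    simp [mem_piAntidiag, mem_finsuppAntidiag]

lemma mem_partitions {k n : ℕ} {α : Fin k → ℕ} :
    α ∈ partitions k n ↔ ∑ j, (j.1 + 1) * α j = n := by
  refine ⟨fun h => (Finset.mem_filter.mp h).2, fun h => Finset.mem_filter.mpr ⟨?_, h⟩⟩
  refine Fintype.mem_piFinset.mpr fun j => Finset.mem_range_succ_iff.mpr ?_
  calc α j ≤ (j.1 + 1) * α j := Nat.le_mul_of_pos_left _ j.1.succ_pos
    _ ≤ ∑ j, (j.1 + 1) * α j :=
      Finset.single_le_sum (f := fun j : Fin k => (j.1 + 1) * α j) (by simp) (Finset.mem_univ j)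
    _ = n := h

lemma partitions_zero (k : ℕ) : partitions k 0 = {0} := by
  ext α
  simp [mem_partitions, Finset.sum_eq_zero_iff, funext_iff]

lemma Fq_eq_sum (k : ℕ) (q : ℚ) (n : ℕ) :
    Fq k q n = ∑ α ∈ partitions k n,
      C (B q (∑ j, α j) / ∏ j, ((α j).factorial : ℚ)) * ∏ j, X j ^ α j := by
  rw [Fq]
  split_ifs with hn
  · simp [hn, partitions_zero, B]
  · rfl

lemma Fq_one (k n : ℕ) : Fq k 1 n = MvPolynomial.map (Int.castRingHom ℚ) (F k n) := by
  rw [Fq_eq_sum, F, map_sum]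
  refine Finset.sum_congr rfl fun α _ => ?_
  rw [B_eq_ascPochhammer_eval, ascPochhammer_eval_one, ← Nat.cast_multinomial]
  simp

/-- `T = t₁x + ⋯ + t_k x^k`, so that `∑ₙ F_{k,n} xⁿ = 1 / (1 - T)`. -/
noncomputable def stepSeries (k : ℕ) : (MvPolynomial (Fin k) ℚ)⟦X⟧ :=
  ∑ j : Fin k, PowerSeries.monomial (j.1 + 1) (X j)

/-- `(1 - T)^(-q)`, as the binomial series `(1 + X)^(-q)` evaluated at `X = -T`. -/
noncomputable def fqSeries (k : ℕ) (q : ℚ) : (MvPolynomial (Fin k) ℚ)⟦X⟧ :=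
  (PowerSeries.binomialSeries ℚ (-q)).subst (-stepSeries k)

lemma hasSubst_neg_stepSeries (k : ℕ) : PowerSeries.HasSubst (-stepSeries k) :=
  PowerSeries.HasSubst.of_constantCoeff_zero' <| by
    simp only [stepSeries, map_neg, map_sum, ← PowerSeries.coeff_zero_eq_constantCoeff_apply,
      PowerSeries.coeff_monomial]
    simp

lemma fqSeries_natCast_mul (k m : ℕ) (q : ℚ) : fqSeries k (m * q) = fqSeries k q ^ m := by
  have binomialSeries_pow :
      PowerSeries.binomialSeries ℚ (-(m * q)) = PowerSeries.binomialSeries ℚ (-q) ^ m := by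
    induction m with
    | zero => simp
    | succ m ih =>
      rw [Nat.cast_succ, add_mul, one_mul, neg_add, PowerSeries.binomialSeries_add, ih, pow_succ]
  rw [fqSeries, binomialSeries_pow, PowerSeries.subst_pow (hasSubst_neg_stepSeries k)]
  rfl

lemma coeff_stepSeries_pow (k n d : ℕ) :
    PowerSeries.coeff n (stepSeries k ^ d) =
      ∑ α ∈ partitions k n with ∑ j, α j = d,
        (Nat.multinomial Finset.univ α : MvPolynomial (Fin k) ℚ) * ∏ j, X j ^ α j := by
  simp_rw [stepSeries, Finset.sum_pow_eq_sum_piAntidiag, map_sum, PowerSeries.monomial_pow,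
    PowerSeries.prod_monomial, ← map_natCast PowerSeries.C, PowerSeries.coeff_C_mul,
    PowerSeries.coeff_monomial, mul_ite, mul_zero, ← Finset.sum_filter]
  refine Finset.sum_congr (Finset.ext fun α => ?_) fun _ _ => rfl
  simp only [Finset.mem_filter, Finset.mem_piAntidiag, mem_partitions, Finset.mem_univ]
  simp [mul_comm, and_comm, eq_comm]

lemma coeff_fqSeries (k : ℕ) (q : ℚ) (n : ℕ) :
    PowerSeries.coeff n (fqSeries k q) = Fq k q n := by
  set term : (Fin k → ℕ) → MvPolynomial (Fin k) ℚ :=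
    fun α => C (B q (∑ j, α j) / ∏ j, ((α j).factorial : ℚ)) * ∏ j, X j ^ α j
  have coeff_term (d : ℕ) :
      PowerSeries.coeff d (PowerSeries.binomialSeries ℚ (-q)) •
          PowerSeries.coeff n ((-stepSeries k) ^ d) =
        ∑ α ∈ partitions k n with ∑ j, α j = d, term α := by
    rw [PowerSeries.binomialSeries_coeff, neg_pow, ← map_one PowerSeries.C, ← map_neg, ← map_pow,
      PowerSeries.coeff_C_mul, coeff_stepSeries_pow, Finset.mul_sum, Finset.smul_sum]
    refine Finset.sum_congr rfl fun α hα => ?_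
    obtain rfl := (Finset.mem_filter.mp hα).2
    have scalar : B q (∑ j, α j) / ∏ j, ((α j).factorial : ℚ) =
        Ring.choose (-q) (∑ j, α j) * (-1) ^ (∑ j, α j) * Nat.multinomial Finset.univ α := by
      rw [choose_neg_mul_neg_one_pow, Nat.cast_multinomial]
      field_simp
    rw [smul_eq_mul, mul_one, MvPolynomial.smul_eq_C_mul]
    simp only [term, scalar, map_mul, map_pow, map_neg, map_one, map_natCast, mul_assoc]
  rw [fqSeries, PowerSeries.coeff_subst' (hasSubst_neg_stepSeries k), finsum_congr coeff_term,
    finsum_eq_sum_of_support_subset (s := (partitions k n).image fun α => ∑ j, α j),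
    Finset.sum_fiberwise_of_maps_to (fun α hα => Finset.mem_image_of_mem _ hα), Fq_eq_sum]
  intro d hd
  obtain ⟨α, hα, -⟩ := Finset.exists_ne_zero_of_sum_ne_zero hd
  obtain ⟨hpart, rfl⟩ := Finset.mem_filter.mp hα
  exact Finset.mem_image_of_mem _ hpart

theorem Fq_rat_root_general (k : ℕ) (a b : ℕ) (hb : 1 ≤ b) (n : ℕ) :
    ∑ j ∈ Finset.Nat.antidiagonalTuple b n, ∏ i, Fq k ((a : ℚ) / (b : ℚ)) (j i) =
      ∑ j ∈ Finset.Nat.antidiagonalTuple a n,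
        ∏ i, MvPolynomial.map (Int.castRingHom ℚ) (F k (j i)) := by
  have hb0 : (b : ℚ) ≠ 0 := Nat.cast_ne_zero.mpr (Nat.one_le_iff_ne_zero.mp hb)
  calc ∑ j ∈ Finset.Nat.antidiagonalTuple b n, ∏ i, Fq k ((a : ℚ) / (b : ℚ)) (j i)
      = PowerSeries.coeff n (fqSeries k (a / b) ^ b) := by
        simp only [PowerSeries.coeff_pow_eq_sum_antidiagonalTuple, coeff_fqSeries]
    _ = PowerSeries.coeff n (fqSeries k 1 ^ a) := by
        rw [← fqSeries_natCast_mul, ← fqSeries_natCast_mul, mul_div_cancel₀ _ hb0, mul_one]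
    _ = ∑ j ∈ Finset.Nat.antidiagonalTuple a n,
          ∏ i, MvPolynomial.map (Int.castRingHom ℚ) (F k (j i)) := by
        simp only [PowerSeries.coeff_pow_eq_sum_antidiagonalTuple, coeff_fqSeries, Fq_one]

theorem Fq_rat_root (k : ℕ) (hk : 1 ≤ k) (a b : ℕ) (ha : 1 ≤ a) (hb : 1 ≤ b) (n : ℕ) :
    ∑ j ∈ Finset.Nat.antidiagonalTuple b n, ∏ i, Fq k ((a : ℚ) / (b : ℚ)) (j i) =
      ∑ j ∈ Finset.Nat.antidiagonalTuple a n,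
        ∏ i, MvPolynomial.map (Int.castRingHom ℚ) (F k (j i)) :=
  Fq_rat_root_general k a b hb n
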